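/- For every density operator ρ on ℂ^d, every positive integer n and every δ > 0, Tr Π^n_{ρ,δ} ≤ exp₂(nH(ρ) + K·d·δ·√n) and Tr Π^n_{ρ,δ} ≥ (1 − d/δ²)·exp₂(nH(ρ) − K·d·δ·√n), where K = 2 log₂(e)/e and H(ρ) = −Tr(ρ log₂ ρ). -/

import Mathlib

/-!
With respect to the eigenbasis of `ρ` everything is classical. The `π j` are orthogonal rank-one
projectors, so `Tr Π^n_{ρ,δ}` counts the variance-typical sequences; and `Tr p(ρ)` equals both
`∑ j, p (R j)` and the sum of `p` over the eigenvalues for every polynomial `p`, so by Lagrange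
interpolation `H(ρ)` is the Shannon entropy `H(R)`.

On a typical sequence, `log₂ Rⁿ(jⁿ) = ∑ j, N(j|jⁿ) log₂ R(j)` differs from `-n H(R)` by at most
`∑ j, δ √n √(R(j)(1 - R(j))) |log₂ R(j)| ≤ K d δ √n`, since `√p |ln p| ≤ 2/e` (from `e x ≤ exp x`).
Hence every typical sequence has probability within a factor `exp₂(± K d δ √n)` of `exp₂(-n H)`.
The upper bound follows because the typical probabilities sum to at most `1`, the lower one because
by Chebyshev's inequality and a union bound over the `d` letters the typical set has probability
at least `1 - d/δ²`.
-/

open Matrix BigOperators Finset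
open scoped Classical ComplexOrder

noncomputable section

/-- Square complex matrices of size `d` (operators on `ℂ^d`). -/
abbrev Mat (d : ℕ) := Matrix (Fin d) (Fin d) ℂ

/-- Operators on the `n`-fold tensor power `(ℂ^d)^{⊗n}`, indexed by `Fin n → Fin d`. -/
abbrev MatPow (d n : ℕ) := Matrix (Fin n → Fin d) (Fin n → Fin d) ℂ

/-- Tensor product `A 0 ⊗ A 1 ⊗ ⋯ ⊗ A (n-1)` of a family of `d × d` matrices. -/
def tensorPow {d n : ℕ} (A : Fin n → Mat d) : MatPow d n :=
  Matrix.of fun j k => ∏ i, A i (j i) (k i)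

/-- Exponential to base 2. -/
def exp2 (t : ℝ) : ℝ := (2 : ℝ) ^ t

/-- `P` is a probability distribution on the finite set `X`. -/
def IsProbDist {X : Type*} [Fintype X] (P : X → ℝ) : Prop :=
  (∀ x, 0 ≤ P x) ∧ ∑ x, P x = 1

/-- `ρ` is a density operator (a state): positive semidefinite with trace one. -/
def IsState {ι : Type*} [Fintype ι] [DecidableEq ι] (ρ : Matrix ι ι ℂ) : Prop :=
  ρ.PosSemidef ∧ ρ.trace = 1

/-- `N(x|x^n)`: number of occurrences of the letter `x` in the sequence `xs`. -/
def countIn {X : Type*} {n : ℕ} (x : X) (xs : Fin n → X) : ℕ :=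
  (Finset.univ.filter fun i => xs i = x).card

/-- The variance-typical set `T^n_{P,δ}`. -/
def typicalSet {X : Type*} [Fintype X] (n : ℕ) (P : X → ℝ) (δ : ℝ) :
    Finset (Fin n → X) :=
  Finset.univ.filter fun xs => ∀ x : X,
    |(countIn x xs : ℝ) - n * P x| ≤ δ * Real.sqrt n * Real.sqrt (P x * (1 - P x))

/-- Product (i.i.d.) probability `P^{⊗n}(A)` of a set `A` of sequences. -/
def prodProb {X : Type*} [Fintype X] {n : ℕ} (P : X → ℝ) (A : Finset (Fin n → X)) : ℝ :=
  ∑ xs ∈ A, ∏ i, P (xs i)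

/-- Shannon entropy to base 2. -/
def shannonEntropy {X : Type*} [Fintype X] (P : X → ℝ) : ℝ :=
  -∑ x, P x * Real.logb 2 (P x)

/-- von Neumann entropy to base 2, `H(ρ) = -Tr(ρ log₂ ρ)`, via the eigenvalues. -/
def vnEntropy {d : ℕ} (ρ : Mat d) : ℝ :=
  if h : ρ.IsHermitian then -∑ i, h.eigenvalues i * Real.logb 2 (h.eigenvalues i) else 0

/-- The constant `K = 2 log₂(e) / e`. -/
def Kconst : ℝ := 2 * Real.logb 2 (Real.exp 1) / Real.exp 1

/-- A diagonalization `ρ = Σ_j R j • π j` into one-dimensional mutually orthogonal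
eigenprojectors, with eigenvalue list `R` a probability distribution. -/
def IsDiagonalization {d : ℕ} (ρ : Mat d) (R : Fin d → ℝ) (π : Fin d → Mat d) : Prop :=
  (∀ j, (π j).PosSemidef) ∧ (∀ j, π j * π j = π j) ∧ (∀ j, (π j).trace = 1) ∧
    (∀ j k, j ≠ k → π j * π k = 0) ∧ (∑ j, π j = 1) ∧
    ρ = ∑ j, (R j : ℂ) • π j ∧ IsProbDist R

/-- The variance-typical projector `Π^n_{ρ,δ}` of a state with fixed diagonalization
`(R, π)`. -/
def typicalProj {d : ℕ} (n : ℕ) (R : Fin d → ℝ) (π : Fin d → Mat d) (δ : ℝ) : MatPow d n :=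
  ∑ js ∈ typicalSet n R δ, tensorPow fun i => π (js i)

/-- `B` is an `η`-shadow of the state `σ`: `0 ≤ B ≤ 1` and `Tr(σB) ≥ η`. -/
def IsShadow {ι : Type*} [Fintype ι] [DecidableEq ι] (σ B : Matrix ι ι ℂ) (η : ℝ) : Prop :=
  B.PosSemidef ∧ ((1 : Matrix ι ι ℂ) - B).PosSemidef ∧ η ≤ (Matrix.trace (σ * B)).re

/-- Average state `PW = Σ_x P(x) W_x` of a cq-channel under input distribution `P`. -/
def avgState {X : Type*} [Fintype X] {d : ℕ} (P : X → ℝ) (W : X → Mat d) : Mat d :=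
  ∑ x, (P x : ℂ) • W x

/-- Conditional von Neumann entropy `H(W|P) = Σ_x P(x) H(W_x)`. -/
def condEntropy {X : Type*} [Fintype X] {d : ℕ} (P : X → ℝ) (W : X → Mat d) : ℝ :=
  ∑ x, P x * vnEntropy (W x)

/-- Mutual information `I(P;W) = H(PW) − H(W|P)`. -/
def mutualInfo {X : Type*} [Fintype X] {d : ℕ} (P : X → ℝ) (W : X → Mat d) : ℝ :=
  vnEntropy (avgState P W) - condEntropy P W

/-- Capacity `C(W) = max_P I(P;W)`. -/
def capacity {X : Type*} [Fintype X] {d : ℕ} (W : X → Mat d) : ℝ :=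
  sSup {c | ∃ P : X → ℝ, IsProbDist P ∧ c = mutualInfo P W}

/-- `(f, D)` (with message set `M` inside the outcome index set `M'`) is an
`(n,λ)`-code for the cq-channel `W`: the `D m` are positive semidefinite, sum to the
identity, and each message is decoded correctly with probability at least `1 - λ`. -/
def IsCode {X : Type*} [Fintype X] {d n : ℕ} (W : X → Mat d) (lam : ℝ)
    {M' : Type*} [Fintype M'] (M : Finset M') (f : M' → Fin n → X)
    (D : M' → MatPow d n) : Prop :=
  (∀ m, (D m).PosSemidef) ∧ (∑ m, D m = 1) ∧
    ∀ m ∈ M, 1 - lam ≤ (Matrix.trace (tensorPow (fun i => W (f m i)) * D m)).re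

/-- `N(n,λ)`: maximal size of an `(n,λ)`-code for `W`. -/
def maxCodeSize {X : Type*} [Fintype X] (d : ℕ) (W : X → Mat d) (n : ℕ) (lam : ℝ) : ℕ :=
  sSup {k | ∃ (M' : Type) (_ : Fintype M') (M : Finset M') (f : M' → Fin n → X)
    (D : M' → MatPow d n), IsCode W lam M f D ∧ M.card = k}

/-- Trace norm `‖A‖₁ = Tr|A|`: the sum of the singular values. -/
def traceNorm {ι : Type*} [Fintype ι] [DecidableEq ι] (A : Matrix ι ι ℂ) : ℝ :=
  ∑ i, Real.sqrt ((Matrix.posSemidef_conjTranspose_mul_self A).1.eigenvalues i)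

/-- Trace distance `D(ρ,σ) = ½‖ρ−σ‖₁`. -/
def traceDist {ι : Type*} [Fintype ι] [DecidableEq ι] (ρ σ : Matrix ι ι ℂ) : ℝ :=
  traceNorm (ρ - σ) / 2

/-- (Pure-state) fidelity `F(ρ,σ) = Tr(ρσ)`. -/
def fidelity {ι : Type*} [Fintype ι] [DecidableEq ι] (ρ σ : Matrix ι ι ℂ) : ℝ :=
  (Matrix.trace (ρ * σ)).re

/-- A pure state: the rank-one orthogonal projector `|ψ⟩⟨ψ|` onto the span of a
unit vector `ψ`. -/
def IsPureState {ι : Type*} [Fintype ι] (ρ : Matrix ι ι ℂ) : Prop :=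
  ∃ ψ : ι → ℂ, (∑ i, star (ψ i) * ψ i) = 1 ∧ ρ = Matrix.vecMulVec ψ (star ψ)

/-- The set of eigenvalue-index sequences `js` that are variance-typical, with
constant `δ`, for the distribution `q x` on each block `I_x = {i : xs i = x}`. -/
def condTypicalSet {X : Type*} [Fintype X] {n d : ℕ} (xs : Fin n → X)
    (q : X → Fin d → ℝ) (δ : ℝ) : Finset (Fin n → Fin d) :=
  Finset.univ.filter fun js => ∀ (x : X) (k : Fin d),
    |((Finset.univ.filter fun i => xs i = x ∧ js i = k).card : ℝ) - (countIn x xs : ℝ) * q x k|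
      ≤ δ * Real.sqrt (countIn x xs) * Real.sqrt (q x k * (1 - q x k))

/-- Conditional variance-typical projector `Π^n_{W,δ}(x^n) = ⊗_{x∈X} Π^{I_x}_{W_x,δ}`,
with respect to fixed diagonalizations `W_x = Σ_j (q x j) • (π x j)`. -/
def condTypicalProj {X : Type*} [Fintype X] {d : ℕ} {n : ℕ} (xs : Fin n → X)
    (q : X → Fin d → ℝ) (π : X → Fin d → Mat d) (δ : ℝ) : MatPow d n :=
  ∑ js ∈ condTypicalSet xs q δ, tensorPow fun i => π (xs i) (js i)

theorem exp2_add (s t : ℝ) : exp2 (s + t) = exp2 s * exp2 t := Real.rpow_add two_pos s t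

theorem exp2_pos (t : ℝ) : 0 < exp2 t := Real.rpow_pos_of_pos two_pos t

theorem exp2_neg_mul_exp2 (t : ℝ) : exp2 (-t) * exp2 t = 1 := by
  rw [← exp2_add, neg_add_cancel, exp2, Real.rpow_zero]

theorem exp2_monotone : Monotone exp2 := fun _ _ h => Real.rpow_le_rpow_of_exponent_le one_le_two h

theorem exp2_sum {α : Type*} (s : Finset α) (f : α → ℝ) :
    exp2 (∑ a ∈ s, f a) = ∏ a ∈ s, exp2 (f a) :=
  Real.rpow_sum_of_pos two_pos f s

theorem exp2_natCast_mul_logb (k : ℕ) {p : ℝ} (hp : 0 < p) :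
    exp2 (k * Real.logb 2 p) = p ^ k := by
  rw [exp2, mul_comm, Real.rpow_mul zero_le_two, Real.rpow_logb two_pos one_lt_two.ne' hp,
    Real.rpow_natCast]

theorem Kconst_eq : Kconst = 2 / (Real.exp 1 * Real.log 2) := by
  rw [Kconst, Real.logb, Real.log_exp]
  field_simp

theorem sqrt_mul_neg_log_le {p : ℝ} (hp : 0 < p) :
    Real.sqrt p * -Real.log p ≤ 2 / Real.exp 1 := by
  have hsqrt : 0 < Real.sqrt p := Real.sqrt_pos.mpr hp
  have h := Real.exp_one_mul_le_exp (x := -Real.log (Real.sqrt p))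
  rw [Real.exp_neg, Real.exp_log hsqrt, Real.log_sqrt hp.le, ← one_div, le_div_iff₀ hsqrt] at h
  rw [le_div_iff₀ (Real.exp_pos 1)]
  linear_combination 2 * h

theorem sqrt_mul_one_sub_mul_abs_logb_le {p : ℝ} (h0 : 0 ≤ p) (h1 : p ≤ 1) :
    Real.sqrt (p * (1 - p)) * |Real.logb 2 p| ≤ Kconst := by
  rcases h0.eq_or_lt with rfl | hp
  · rw [Kconst_eq]
    simp only [Real.logb_zero, abs_zero, mul_zero]
    positivity
  have hlog2 : 0 < Real.log 2 := Real.log_pos one_lt_two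
  have habs : |Real.logb 2 p| = -Real.log p / Real.log 2 := by
    rw [Real.logb, abs_div, abs_of_pos hlog2, abs_of_nonpos (Real.log_nonpos h0 h1)]
  calc Real.sqrt (p * (1 - p)) * |Real.logb 2 p|
      ≤ Real.sqrt p * |Real.logb 2 p| := by
        gcongr
        nlinarith
    _ = Real.sqrt p * -Real.log p / Real.log 2 := by rw [habs, mul_div_assoc]
    _ ≤ 2 / Real.exp 1 / Real.log 2 := by gcongr; exact sqrt_mul_neg_log_le hp
    _ = Kconst := by rw [Kconst_eq, div_div]

section IIDSums

variable {X : Type*} [Fintype X] {P : X → ℝ}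

theorem sum_prod_mul_prod_eq_pow {ι : Type*} [Fintype ι] [DecidableEq ι] (hP : ∑ x, P x = 1)
    (f : X → ℝ) (s : Finset ι) :
    ∑ xs : ι → X, (∏ i, P (xs i)) * ∏ i ∈ s, f (xs i) = (∑ x, P x * f x) ^ s.card := by
  calc ∑ xs : ι → X, (∏ i, P (xs i)) * ∏ i ∈ s, f (xs i)
      = ∑ xs : ι → X, ∏ i, P (xs i) * (if i ∈ s then f (xs i) else 1) := by
        simp only [prod_mul_distrib, prod_ite_mem, univ_inter]
    _ = ∏ i, ∑ x, P x * (if i ∈ s then f x else 1) :=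
        (Fintype.prod_sum fun i x => P x * (if i ∈ s then f x else 1)).symm
    _ = ∏ i, if i ∈ s then ∑ x, P x * f x else 1 := by
        refine prod_congr rfl fun i _ => ?_
        split_ifs <;> simp [hP]
    _ = (∑ x, P x * f x) ^ s.card := by rw [prod_ite_mem, univ_inter, prod_const]

theorem sum_prod_mul_sq_countIn_sub (hP : ∑ x, P x = 1) (x : X) (n : ℕ) :
    ∑ xs : Fin n → X, (∏ i, P (xs i)) * ((countIn x xs : ℝ) - n * P x) ^ 2
      = n * (P x * (1 - P x)) := by
  set g : X → ℝ := fun y => (if y = x then 1 else 0) - P x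
  have hcount : ∀ xs : Fin n → X, (countIn x xs : ℝ) - n * P x = ∑ i, g (xs i) := fun xs => by
    simp only [g, countIn, natCast_card_filter, Finset.sum_sub_distrib, Finset.sum_const,
      Finset.card_univ, Fintype.card_fin, nsmul_eq_mul]
  have hmean : ∑ y, P y * g y = 0 := by
    simp [g, mul_sub, Finset.sum_sub_distrib, ← Finset.sum_mul, hP]
  have hsq : ∑ y, P y * (g y * g y) = P x * (1 - P x) := by
    have : ∀ y, P y * (g y * g y) = (if y = x then P x * (1 - 2 * P x) else 0) + P y * P x ^ 2 :=
      fun y => by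
        by_cases hy : y = x
        · simp only [g, hy, if_true]; ring
        · simp only [g, hy, if_false]; ring
    simp only [this, Finset.sum_add_distrib, ← Finset.sum_mul, hP, Finset.sum_ite_eq',
      Finset.mem_univ, if_true]
    ring
  have hcov : ∀ i j : Fin n, ∑ xs : Fin n → X, (∏ k, P (xs k)) * (g (xs i) * g (xs j))
      = if i = j then P x * (1 - P x) else 0 := fun i j => by
    split_ifs with hij
    · subst hij
      simpa [hsq] using sum_prod_mul_prod_eq_pow hP (fun y => g y * g y) {i}
    · simpa [prod_pair hij, hmean] using sum_prod_mul_prod_eq_pow hP g {i, j}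
  calc ∑ xs : Fin n → X, (∏ i, P (xs i)) * ((countIn x xs : ℝ) - n * P x) ^ 2
      = ∑ xs : Fin n → X, ∑ i, ∑ j, (∏ k, P (xs k)) * (g (xs i) * g (xs j)) := by
        simp_rw [hcount, sq, Finset.sum_mul_sum, Finset.mul_sum]
    _ = ∑ i, ∑ j, ∑ xs : Fin n → X, (∏ k, P (xs k)) * (g (xs i) * g (xs j)) := by
        rw [Finset.sum_comm]
        exact sum_congr rfl fun i _ => Finset.sum_comm
    _ = n * (P x * (1 - P x)) := by simp [hcov]

end IIDSums

theorem sum_filter_lt_abs_le_of_sum_mul_sq_le {ι : Type*} (s : Finset ι) {w D : ι → ℝ}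
    (hw : ∀ i ∈ s, 0 ≤ w i) {c t : ℝ} (hc : 0 ≤ c) (ht : 0 ≤ t)
    (h : ∑ i ∈ s, w i * D i ^ 2 ≤ c ^ 2 * t) :
    ∑ i ∈ s with c < |D i|, w i ≤ t := by
  have hwD : ∀ i ∈ s, 0 ≤ w i * D i ^ 2 := fun i hi => mul_nonneg (hw i hi) (sq_nonneg _)
  rcases hc.eq_or_lt with rfl | hc
  · have hzero : ∀ i ∈ s, w i * D i ^ 2 = 0 :=
      (sum_eq_zero_iff_of_nonneg hwD).mp (le_antisymm (by simpa using h) (sum_nonneg hwD))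
    refine le_of_eq_of_le (sum_eq_zero fun i hi => ?_) ht
    obtain ⟨hi, hD⟩ := mem_filter.mp hi
    simpa [abs_pos.mp hD] using hzero i hi
  refine le_of_mul_le_mul_left ?_ (pow_pos hc 2)
  calc c ^ 2 * ∑ i ∈ s with c < |D i|, w i
      = ∑ i ∈ s with c < |D i|, w i * c ^ 2 := by rw [mul_sum]; simp_rw [mul_comm]
    _ ≤ ∑ i ∈ s with c < |D i|, w i * D i ^ 2 := by
        refine sum_le_sum fun i hi => ?_
        obtain ⟨hi, hD⟩ := mem_filter.mp hi
        have hcD : c ^ 2 ≤ D i ^ 2 := by simpa only [sq_abs] using pow_le_pow_left₀ hc.le hD.le 2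
        exact mul_le_mul_of_nonneg_left hcD (hw i hi)
    _ ≤ ∑ i ∈ s, w i * D i ^ 2 := sum_le_sum_of_subset_of_nonneg (filter_subset _ _)
          fun i hi _ => hwD i hi
    _ ≤ c ^ 2 * t := h

theorem IsProbDist.le_one {X : Type*} [Fintype X] {P : X → ℝ} (hP : IsProbDist P) (x : X) :
    P x ≤ 1 :=
  hP.2 ▸ single_le_sum (fun y _ => hP.1 y) (mem_univ x)

section TypicalSet

variable {X : Type*} [Fintype X] {P : X → ℝ} {n : ℕ} {δ : ℝ}

theorem prodProb_univ (hP : ∑ x, P x = 1) : prodProb P (univ : Finset (Fin n → X)) = 1 := by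
  simp [prodProb, ← Fintype.prod_sum, hP]

theorem prodProb_union_le (hP : ∀ x, 0 ≤ P x) (A B : Finset (Fin n → X)) :
    prodProb P (A ∪ B) ≤ prodProb P A + prodProb P B := by
  rw [prodProb, prodProb, prodProb, ← sum_union_inter]
  exact le_add_of_nonneg_right (sum_nonneg fun xs _ => prod_nonneg fun i _ => hP (xs i))

def deviationSet (n : ℕ) (P : X → ℝ) (δ : ℝ) (x : X) : Finset (Fin n → X) :=
  univ.filter fun xs =>
    δ * Real.sqrt n * Real.sqrt (P x * (1 - P x)) < |(countIn x xs : ℝ) - n * P x|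

theorem sdiff_typicalSet_eq_sup_deviationSet :
    univ \ typicalSet n P δ = univ.sup (deviationSet n P δ) := by
  ext xs
  simp [typicalSet, deviationSet, mem_sup]

theorem prodProb_deviationSet_le (hP : IsProbDist P) (hδ : 0 < δ) (x : X) :
    prodProb P (deviationSet n P δ x) ≤ 1 / δ ^ 2 := by
  have hvar : 0 ≤ P x * (1 - P x) := mul_nonneg (hP.1 x) (sub_nonneg.mpr (hP.le_one x))
  refine sum_filter_lt_abs_le_of_sum_mul_sq_le _ (fun xs _ => prod_nonneg fun i _ => hP.1 (xs i))
    (by positivity) (by positivity) (le_of_eq ?_)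
  rw [sum_prod_mul_sq_countIn_sub hP.2, mul_pow, mul_pow, Real.sq_sqrt n.cast_nonneg,
    Real.sq_sqrt hvar]
  field_simp

theorem prodProb_sdiff_typicalSet_le (hP : IsProbDist P) (hδ : 0 < δ) :
    prodProb P (univ \ typicalSet n P δ) ≤ Fintype.card X / δ ^ 2 := by
  rw [sdiff_typicalSet_eq_sup_deviationSet]
  calc _ ≤ ∑ x, prodProb P (deviationSet n P δ x) :=
        apply_sup_le_sum (f := prodProb P) (by simp [prodProb]) (prodProb_union_le hP.1 _ _) univ
    _ ≤ ∑ _x : X, 1 / δ ^ 2 := sum_le_sum fun x _ => prodProb_deviationSet_le hP hδ x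
    _ = Fintype.card X / δ ^ 2 := by simp [div_eq_mul_inv]

theorem one_sub_card_div_sq_le_prodProb_typicalSet (hP : IsProbDist P) (hδ : 0 < δ) :
    1 - Fintype.card X / δ ^ 2 ≤ prodProb P (typicalSet n P δ) := by
  have hsplit : prodProb P (univ \ typicalSet n P δ) + prodProb P (typicalSet n P δ) = 1 :=
    (sum_sdiff (subset_univ _)).trans (prodProb_univ hP.2)
  linarith [prodProb_sdiff_typicalSet_le (n := n) hP hδ]

theorem countIn_eq_zero_of_mem_typicalSet {xs : Fin n → X} (hxs : xs ∈ typicalSet n P δ) {x : X}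
    (hx : P x = 0) : countIn x xs = 0 := by
  simpa [hx] using (mem_filter.mp hxs).2 x

theorem prod_eq_exp2_of_mem_typicalSet (hP : IsProbDist P) {xs : Fin n → X}
    (hxs : xs ∈ typicalSet n P δ) :
    ∏ i, P (xs i) = exp2 (∑ x, (countIn x xs : ℝ) * Real.logb 2 (P x)) := by
  rw [← prod_fiberwise_of_maps_to (g := xs) (fun i _ => mem_univ (xs i)), exp2_sum]
  refine prod_congr rfl fun x _ => ?_
  rw [prod_congr rfl fun i hi => congrArg P (mem_filter.mp hi).2, prod_const]
  change P x ^ countIn x xs = exp2 (countIn x xs * Real.logb 2 (P x))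
  rcases (hP.1 x).eq_or_lt with hx | hx
  · simp [countIn_eq_zero_of_mem_typicalSet hxs hx.symm, exp2]
  · exact (exp2_natCast_mul_logb _ hx).symm

theorem abs_sum_countIn_mul_logb_add_le (hP : IsProbDist P) (hδ : 0 ≤ δ) {xs : Fin n → X}
    (hxs : xs ∈ typicalSet n P δ) :
    |∑ x, (countIn x xs : ℝ) * Real.logb 2 (P x) + n * shannonEntropy P|
      ≤ Kconst * Fintype.card X * δ * Real.sqrt n := by
  have hdev : ∑ x, (countIn x xs : ℝ) * Real.logb 2 (P x) + n * shannonEntropy P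
      = ∑ x, ((countIn x xs : ℝ) - n * P x) * Real.logb 2 (P x) := by
    simp only [shannonEntropy, mul_neg, mul_sum, sub_mul, sum_sub_distrib, mul_assoc]
    ring
  rw [hdev]
  calc |∑ x, ((countIn x xs : ℝ) - n * P x) * Real.logb 2 (P x)|
      ≤ ∑ x, |(countIn x xs : ℝ) - n * P x| * |Real.logb 2 (P x)| := by
        simp only [← abs_mul]
        exact abs_sum_le_sum_abs _ _
    _ ≤ ∑ x, δ * Real.sqrt n * (Real.sqrt (P x * (1 - P x)) * |Real.logb 2 (P x)|) := by
        refine sum_le_sum fun x _ => ?_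
        rw [← mul_assoc]
        exact mul_le_mul_of_nonneg_right ((mem_filter.mp hxs).2 x) (abs_nonneg _)
    _ ≤ ∑ _x : X, δ * Real.sqrt n * Kconst := by
        refine sum_le_sum fun x _ => mul_le_mul_of_nonneg_left ?_ (by positivity)
        exact sqrt_mul_one_sub_mul_abs_logb_le (hP.1 x) (hP.le_one x)
    _ = Kconst * Fintype.card X * δ * Real.sqrt n := by
        rw [sum_const, card_univ, nsmul_eq_mul]
        ring

theorem prod_mem_Icc_of_mem_typicalSet (hP : IsProbDist P) (hδ : 0 ≤ δ) {xs : Fin n → X}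
    (hxs : xs ∈ typicalSet n P δ) :
    ∏ i, P (xs i) ∈
      Set.Icc (exp2 (-(n * shannonEntropy P) - Kconst * Fintype.card X * δ * Real.sqrt n))
        (exp2 (-(n * shannonEntropy P) + Kconst * Fintype.card X * δ * Real.sqrt n)) := by
  have h := abs_le.mp (abs_sum_countIn_mul_logb_add_le hP hδ hxs)
  rw [prod_eq_exp2_of_mem_typicalSet hP hxs]
  exact ⟨exp2_monotone (by linarith), exp2_monotone (by linarith)⟩

theorem card_typicalSet_le (hP : IsProbDist P) (hδ : 0 ≤ δ) :
    ((typicalSet n P δ).card : ℝ)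
      ≤ exp2 (n * shannonEntropy P + Kconst * Fintype.card X * δ * Real.sqrt n) := by
  set e := n * shannonEntropy P + Kconst * Fintype.card X * δ * Real.sqrt n
  have hmass : ((typicalSet n P δ).card : ℝ) * exp2 (-e) ≤ 1 :=
    calc ((typicalSet n P δ).card : ℝ) * exp2 (-e)
        ≤ prodProb P (typicalSet n P δ) := by
          rw [← nsmul_eq_mul]
          refine card_nsmul_le_sum _ _ _ fun xs hxs => ?_
          refine le_of_eq_of_le (congrArg exp2 ?_) (prod_mem_Icc_of_mem_typicalSet hP hδ hxs).1
          ring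
      _ ≤ prodProb P univ := sum_le_sum_of_subset_of_nonneg (subset_univ _)
          fun xs _ _ => prod_nonneg fun i _ => hP.1 (xs i)
      _ = 1 := prodProb_univ hP.2
  calc ((typicalSet n P δ).card : ℝ)
      = ((typicalSet n P δ).card : ℝ) * exp2 (-e) * exp2 e := by
        rw [mul_assoc, exp2_neg_mul_exp2, mul_one]
    _ ≤ exp2 e := mul_le_of_le_one_left (exp2_pos e).le hmass

theorem card_typicalSet_ge (hP : IsProbDist P) (hδ : 0 < δ) :
    (1 - Fintype.card X / δ ^ 2)
        * exp2 (n * shannonEntropy P - Kconst * Fintype.card X * δ * Real.sqrt n)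
      ≤ ((typicalSet n P δ).card : ℝ) := by
  set e := n * shannonEntropy P - Kconst * Fintype.card X * δ * Real.sqrt n
  have hmass : prodProb P (typicalSet n P δ) ≤ ((typicalSet n P δ).card : ℝ) * exp2 (-e) := by
    rw [← nsmul_eq_mul]
    refine sum_le_card_nsmul _ _ _ fun xs hxs => ?_
    refine (prod_mem_Icc_of_mem_typicalSet hP hδ.le hxs).2.trans_eq (congrArg exp2 ?_)
    ring
  calc (1 - Fintype.card X / δ ^ 2) * exp2 e
      ≤ ((typicalSet n P δ).card : ℝ) * exp2 (-e) * exp2 e :=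
        mul_le_mul_of_nonneg_right
          ((one_sub_card_div_sq_le_prodProb_typicalSet hP hδ).trans hmass) (exp2_pos e).le
    _ = ((typicalSet n P δ).card : ℝ) := by
        rw [mul_assoc, exp2_neg_mul_exp2, mul_one]

end TypicalSet

open Polynomial in
theorem sum_comp_eq_of_forall_sum_eval_eq {F ι κ : Type*} [Field F] [Fintype ι] [Fintype κ]
    {a : ι → F} {b : κ → F} (h : ∀ p : F[X], ∑ i, p.eval (a i) = ∑ k, p.eval (b k))
    (f : F → F) : ∑ i, f (a i) = ∑ k, f (b k) := by
  set s := univ.image a ∪ univ.image b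
  have hnode : ∀ z ∈ s, (Lagrange.interpolate s id f).eval z = f z :=
    fun z hz => Lagrange.eval_interpolate_at_node f (Set.injOn_id _) hz
  have := h (Lagrange.interpolate s id f)
  rwa [sum_congr rfl fun i _ => hnode (a i) (by simp [s]),
    sum_congr rfl fun k _ => hnode (b k) (by simp [s])] at this

def CompleteOrthogonalIdempotents.algHom {R A ι : Type*} [CommSemiring R] [Semiring A]
    [Algebra R A] [Fintype ι] {e : ι → A} (he : CompleteOrthogonalIdempotents e) :
    (ι → R) →ₐ[R] A where
  toFun c := ∑ j, c j • e j
  map_one' := by simpa using he.complete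
  map_mul' c c' := by
    simp only [Finset.sum_mul, Finset.mul_sum, smul_mul_smul_comm, he.mul_eq, smul_ite,
      smul_zero, Finset.sum_ite_eq', Finset.mem_univ, if_true, Pi.mul_apply]
  map_zero' := by simp
  map_add' c c' := by simp [add_smul, Finset.sum_add_distrib]
  commutes' r := by
    simp [← Finset.smul_sum, he.complete, Algebra.algebraMap_eq_smul_one]

open Polynomial in
theorem Matrix.trace_aeval_of_algHom {R m ι : Type*} [CommRing R] [Fintype m] [DecidableEq m]
    [Fintype ι] (φ : (ι → R) →ₐ[R] Matrix m m R) (hφ : ∀ c, (φ c).trace = ∑ i, c i)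
    (c : ι → R) (p : R[X]) : (aeval (φ c) p).trace = ∑ i, p.eval (c i) := by
  rw [aeval_algHom_apply, hφ, aeval_pi_apply]
  rfl

open Polynomial in
theorem Matrix.IsHermitian.trace_aeval {𝕜 m : Type*} [RCLike 𝕜] [Fintype m] [DecidableEq m]
    {A : Matrix m m 𝕜} (hA : A.IsHermitian) (p : 𝕜[X]) :
    (aeval A p).trace = ∑ i, p.eval (hA.eigenvalues i : 𝕜) := by
  set U := hA.eigenvectorUnitary
  let φ := (AlgHomClass.toAlgHom (Unitary.conjStarAlgAut 𝕜 (Matrix m m 𝕜) U)).comp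
    (Matrix.diagonalAlgHom 𝕜)
  have hφ : ∀ c, (φ c).trace = ∑ i, c i := fun c => by
    simp [φ, Matrix.trace_mul_comm _ (star (U : Matrix m m 𝕜)), ← Matrix.mul_assoc]
  have hA' : A = φ (RCLike.ofReal ∘ hA.eigenvalues) := hA.spectral_theorem
  conv_lhs => rw [hA', Matrix.trace_aeval_of_algHom φ hφ]
  rfl

theorem IsDiagonalization.completeOrthogonalIdempotents {d : ℕ} {ρ : Mat d} {R : Fin d → ℝ}
    {π : Fin d → Mat d} (h : IsDiagonalization ρ R π) : CompleteOrthogonalIdempotents π :=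
  let ⟨_, hidem, _, horth, hsum, _⟩ := h
  ⟨⟨hidem, horth⟩, hsum⟩

theorem IsDiagonalization.posSemidef {d : ℕ} {ρ : Mat d} {R : Fin d → ℝ}
    {π : Fin d → Mat d} (h : IsDiagonalization ρ R π) : ρ.PosSemidef := by
  obtain ⟨hπ, -, -, -, -, rfl, hR, -⟩ := h
  exact Matrix.posSemidef_sum _ fun j _ => (hπ j).smul (by exact_mod_cast hR j)

open Polynomial in
theorem IsDiagonalization.trace_aeval {d : ℕ} {ρ : Mat d} {R : Fin d → ℝ}
    {π : Fin d → Mat d} (h : IsDiagonalization ρ R π) (p : ℂ[X]) :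
    (aeval ρ p).trace = ∑ j, p.eval (R j : ℂ) := by
  let φ : (Fin d → ℂ) →ₐ[ℂ] Mat d := h.completeOrthogonalIdempotents.algHom
  obtain ⟨-, -, htr, -, -, hρ, -⟩ := id h
  have hφ : ∀ c, (φ c).trace = ∑ j, c j := fun c => by
    simp [φ, CompleteOrthogonalIdempotents.algHom, Matrix.trace_sum, htr]
  rw [show ρ = φ fun j => (R j : ℂ) from hρ, Matrix.trace_aeval_of_algHom φ hφ]

theorem vnEntropy_eq_shannonEntropy {d : ℕ} {ρ : Mat d} {R : Fin d → ℝ} {π : Fin d → Mat d}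
    (h : IsDiagonalization ρ R π) : vnEntropy ρ = shannonEntropy R := by
  have hρ := h.posSemidef.isHermitian
  have key := sum_comp_eq_of_forall_sum_eval_eq
    (fun p => (hρ.trace_aeval p).symm.trans (h.trace_aeval p))
    fun z => ((z.re * Real.logb 2 z.re : ℝ) : ℂ)
  rw [vnEntropy, dif_pos hρ, shannonEntropy]
  exact_mod_cast congrArg Neg.neg key

theorem trace_tensorPow {d n : ℕ} (A : Fin n → Mat d) :
    (tensorPow A).trace = ∏ i, (A i).trace := by
  simp only [Matrix.trace, tensorPow, Matrix.diag, Matrix.of_apply]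
  exact (Fintype.prod_sum fun i k => A i k k).symm

theorem trace_typicalProj {d n : ℕ} {R : Fin d → ℝ} {π : Fin d → Mat d}
    (hπ : ∀ j, (π j).trace = 1) (δ : ℝ) :
    (typicalProj n R π δ).trace = (typicalSet n R δ).card := by
  simp [typicalProj, Matrix.trace_sum, trace_tensorPow, hπ]

theorem typicalProj_trace_bounds_general {d : ℕ} (ρ : Mat d)
    (R : Fin d → ℝ) (π : Fin d → Mat d) (hdiag : IsDiagonalization ρ R π)
    (n : ℕ) (δ : ℝ) (hδ : 0 < δ) :
    (Matrix.trace (typicalProj n R π δ)).re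
        ≤ exp2 ((n : ℝ) * vnEntropy ρ + Kconst * d * δ * Real.sqrt n) ∧
      (1 - (d : ℝ) / δ ^ 2) * exp2 ((n : ℝ) * vnEntropy ρ - Kconst * d * δ * Real.sqrt n)
        ≤ (Matrix.trace (typicalProj n R π δ)).re := by
  obtain ⟨-, -, htr, -, -, -, hR⟩ := id hdiag
  rw [trace_typicalProj htr, Complex.natCast_re, vnEntropy_eq_shannonEntropy hdiag]
  have hupper := card_typicalSet_le (n := n) hR hδ.le
  have hlower := card_typicalSet_ge (n := n) hR hδ
  rw [Fintype.card_fin] at hupper hlower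
  exact ⟨hupper, hlower⟩

/-- **Lemma 2, part 3 (Typical projector, trace bounds).**
`Tr Π^n_{ρ,δ} ≤ exp₂(nH(ρ) + Kdδ√n)` and
`Tr Π^n_{ρ,δ} ≥ (1 − d/δ²) exp₂(nH(ρ) − Kdδ√n)`, with `K = 2 log₂(e)/e`. -/
theorem typicalProj_trace_bounds {d : ℕ} (ρ : Mat d) (hρ : IsState ρ)
    (R : Fin d → ℝ) (π : Fin d → Mat d) (hdiag : IsDiagonalization ρ R π)
    (n : ℕ) (hn : 0 < n) (δ : ℝ) (hδ : 0 < δ) :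
    (Matrix.trace (typicalProj n R π δ)).re
        ≤ exp2 ((n : ℝ) * vnEntropy ρ + Kconst * d * δ * Real.sqrt n) ∧
      (1 - (d : ℝ) / δ ^ 2) * exp2 ((n : ℝ) * vnEntropy ρ - Kconst * d * δ * Real.sqrt n)
        ≤ (Matrix.trace (typicalProj n R π δ)).re :=
  typicalProj_trace_bounds_general ρ R π hdiag n δ hδ
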